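/- arXiv:2307.08698 — 2 statements merged into one kernel-verified Lean document; each statement's English description precedes it below -/
import Mathlib

section
/- Let v̂ be Lipschitz in x with constant L̂ uniformly on ℝ^d × [0,1], let X_t and X̂_t be the flows of v and v̂ respectively started from the same random initial condition Z with law q, and let p₁ = law(X₁), p̂₁ = law(X̂₁). Then W₂²(p₁, p̂₁) ≤ e^{1+2L̂} ∫_0^1 E[‖v(X_s,s) − v̂(X_s,s)‖²] ds. -/
open MeasureTheory ENNReal
open Set intervalIntegral

/-- Squared 2-Wasserstein distance: infimum over couplings of `α, β` of
`∫ ‖x − y‖² dπ`. -/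
noncomputable def W2sq {E : Type*} [NormedAddCommGroup E] [MeasurableSpace E]
    (α β : Measure E) : ℝ≥0∞ :=
  ⨅ (π : Measure (E × E)) (_ : π.map Prod.fst = α) (_ : π.map Prod.snd = β),
    ∫⁻ p, ENNReal.ofReal (‖p.1 - p.2‖ ^ 2) ∂π

lemma pathwise {d : ℕ}
    (v vh : EuclideanSpace ℝ (Fin d) → ℝ → EuclideanSpace ℝ (Fin d))
    (hv : Continuous fun p : EuclideanSpace ℝ (Fin d) × ℝ => v p.1 p.2)
    (hvh : Continuous fun p : EuclideanSpace ℝ (Fin d) × ℝ => vh p.1 p.2)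
    (L : ℝ) (hL : 0 ≤ L)
    (hLip : ∀ (x y : EuclideanSpace ℝ (Fin d)) (t : ℝ),
      ‖vh x t - vh y t‖ ≤ L * ‖x - y‖)
    (x y : ℝ → EuclideanSpace ℝ (Fin d))
    (hxc : Continuous x) (hyc : Continuous y)
    (hx : ∀ t ∈ Set.Ioo (0:ℝ) 1, HasDerivAt x (v (x t) t) t)
    (hy : ∀ t ∈ Set.Ioo (0:ℝ) 1, HasDerivAt y (vh (y t) t) t)
    (h0 : x 0 = y 0) :
    ‖x 1 - y 1‖ ^ 2 ≤ Real.exp (1 + 2 * L) *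
      ∫ s in (0:ℝ)..1, ‖v (x s) s - vh (x s) s‖ ^ 2 := by
  set c : ℝ := 1 + 2 * L with hc
  have hc0 : 0 ≤ c := by positivity
  set g : ℝ → ℝ := fun s => ‖v (x s) s - vh (x s) s‖ ^ 2 with hg
  have hgc : Continuous g := by
    have : Continuous fun s => v (x s) s - vh (x s) s :=
      (hv.comp (hxc.prodMk continuous_id)).sub (hvh.comp (hxc.prodMk continuous_id))
    exact (this.norm.pow 2)
  have hgnn : ∀ s, 0 ≤ g s := fun s => by positivity
  set F : ℝ → ℝ := fun t => ∫ s in (0:ℝ)..t, g s with hF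
  have hFc : Continuous F := by
    exact intervalIntegral.continuous_primitive (fun a b => hgc.intervalIntegrable a b) 0
  set φ : ℝ → ℝ := fun t => Real.exp (-c * t) * ‖x t - y t‖ ^ 2 - F t with hφ
  have hφc : Continuous φ := by
    have : Continuous fun t => ‖x t - y t‖ ^ 2 := ((hxc.sub hyc).norm.pow 2)
    exact (((Real.continuous_exp.comp (continuous_const.mul continuous_id)).mul this)).sub hFc
  -- derivative of φ on Ioo
  have key : ∀ t ∈ Set.Ioo (0:ℝ) 1, ∃ D ≤ 0, HasDerivAt φ D t := by
    intro t ht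
    have hδ : HasDerivAt (fun s => x s - y s) (v (x t) t - vh (y t) t) t :=
      (hx t ht).sub (hy t ht)
    have he : HasDerivAt (fun s => ‖x s - y s‖ ^ 2)
        (2 * inner ℝ (v (x t) t - vh (y t) t) (x t - y t)) t := by
      have := hδ.inner (𝕜 := ℝ) hδ
      have heq : (fun s => ‖x s - y s‖ ^ 2) =
          fun s => (inner ℝ (x s - y s) (x s - y s) : ℝ) := by
        funext s; rw [real_inner_self_eq_norm_sq]
      rw [heq]
      exact this.congr_deriv (by rw [real_inner_comm]; ring)
    have hlin : HasDerivAt (fun s : ℝ => -c * s) (-c) t := by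
      simpa using (hasDerivAt_id t).const_mul (-c)
    have hexp : HasDerivAt (fun s => Real.exp (-c * s)) (Real.exp (-c * t) * -c) t :=
      hlin.exp
    have hFd : HasDerivAt F (g t) t :=
      integral_hasDerivAt_right (hgc.intervalIntegrable 0 t)
        hgc.aestronglyMeasurable.stronglyMeasurableAtFilter hgc.continuousAt
    have hφd : HasDerivAt φ
        (((-c * Real.exp (-c * t)) * ‖x t - y t‖ ^ 2 +
          Real.exp (-c * t) * (2 * inner ℝ (v (x t) t - vh (y t) t) (x t - y t))) - g t) t := by
      have := (hexp.mul he).sub hFd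
      exact this.congr_deriv (by ring)
    refine ⟨_, ?_, hφd⟩
    -- show the derivative is nonpositive
    set δ := x t - y t with hδeq
    set f := v (x t) t - vh (x t) t with hfeq
    have hsplit : (inner ℝ (v (x t) t - vh (y t) t) δ : ℝ)
        = inner ℝ f δ + inner ℝ (vh (x t) t - vh (y t) t) δ := by
      rw [← inner_add_left]
      have : v (x t) t - vh (y t) t = f + (vh (x t) t - vh (y t) t) := by
        rw [hfeq]; abel
      rw [this]
    have h1 : (inner ℝ f δ : ℝ) ≤ ‖f‖ * ‖δ‖ := real_inner_le_norm f δ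
    have h2 : (inner ℝ (vh (x t) t - vh (y t) t) δ : ℝ) ≤ L * ‖δ‖ * ‖δ‖ := by
      calc (inner ℝ (vh (x t) t - vh (y t) t) δ : ℝ) ≤ ‖vh (x t) t - vh (y t) t‖ * ‖δ‖ :=
            real_inner_le_norm _ _
        _ ≤ (L * ‖x t - y t‖) * ‖δ‖ := by
            apply mul_le_mul_of_nonneg_right (hLip _ _ _) (norm_nonneg _)
        _ = L * ‖δ‖ * ‖δ‖ := rfl
    have h2ab : 2 * (‖f‖ * ‖δ‖) ≤ ‖f‖ ^ 2 + ‖δ‖ ^ 2 := by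
      nlinarith [two_mul_le_add_sq ‖f‖ ‖δ‖]
    have hbound : 2 * (inner ℝ (v (x t) t - vh (y t) t) δ : ℝ) ≤ g t + c * ‖δ‖ ^ 2 := by
      rw [hsplit]
      have : 2 * ((inner ℝ f δ : ℝ) + inner ℝ (vh (x t) t - vh (y t) t) δ)
          ≤ 2 * (‖f‖ * ‖δ‖) + 2 * (L * ‖δ‖ * ‖δ‖) := by nlinarith
      calc 2 * ((inner ℝ f δ : ℝ) + inner ℝ (vh (x t) t - vh (y t) t) δ)
          ≤ 2 * (‖f‖ * ‖δ‖) + 2 * (L * ‖δ‖ * ‖δ‖) := this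
        _ ≤ ‖f‖ ^ 2 + ‖δ‖ ^ 2 + 2 * L * ‖δ‖ ^ 2 := by nlinarith
        _ = g t + c * ‖δ‖ ^ 2 := by rw [hg, hc]; ring
    have hexp_pos : 0 < Real.exp (-c * t) := Real.exp_pos _
    have hexp_le1 : Real.exp (-c * t) ≤ 1 := by
      apply Real.exp_le_one_iff.mpr
      nlinarith [ht.1.le]
    nlinarith [hgnn t, mul_le_mul_of_nonneg_left hbound hexp_pos.le,
      mul_le_mul_of_nonneg_right hexp_le1 (hgnn t)]
  -- antitone
  have hanti : AntitoneOn φ (Set.Icc 0 1) := by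
    apply antitoneOn_of_deriv_nonpos (convex_Icc 0 1) hφc.continuousOn
    · intro t ht
      rw [interior_Icc] at ht
      obtain ⟨D, _, hD⟩ := key t ht
      exact hD.differentiableAt.differentiableWithinAt
    · intro t ht
      rw [interior_Icc] at ht
      obtain ⟨D, hD0, hD⟩ := key t ht
      rw [hD.deriv]; exact hD0
  have h10 : φ 1 ≤ φ 0 := hanti (by simp) (by norm_num) zero_le_one
  have hφ0 : φ 0 = 0 := by simp [hφ, hF, h0]
  have hF1 : F 1 = ∫ s in (0:ℝ)..1, ‖v (x s) s - vh (x s) s‖ ^ 2 := rfl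
  rw [hφ0] at h10
  have : Real.exp (-c * 1) * ‖x 1 - y 1‖ ^ 2 ≤ F 1 := by
    have := h10; simp only [hφ] at this; linarith
  have hee : Real.exp c * Real.exp (-c * 1) = 1 := by
    rw [← Real.exp_add]; norm_num
  calc ‖x 1 - y 1‖ ^ 2 = Real.exp c * (Real.exp (-c * 1) * ‖x 1 - y 1‖ ^ 2) := by
        rw [← mul_assoc, hee, one_mul]
    _ ≤ Real.exp c * F 1 := by
        apply mul_le_mul_of_nonneg_left this (Real.exp_pos _).le


/-- Proposition 3 of Albergo–Vanden-Eijnden: if `X, X̂` are the flows of `v`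
and the `L̂`-Lipschitz `v̂` started from the same random initial condition, and
`p₁, p̂₁` are the laws of `X₁, X̂₁`, then
`W₂²(p₁, p̂₁) ≤ e^{1+2L̂} ∫₀¹ E[‖v(X_s,s) − v̂(X_s,s)‖²] ds`. -/
theorem stmt_7 {d : ℕ} {Ω : Type*} [MeasurableSpace Ω]
    (P : Measure Ω) [IsProbabilityMeasure P]
    (v vh : EuclideanSpace ℝ (Fin d) → ℝ → EuclideanSpace ℝ (Fin d))
    (hv : Continuous fun p : EuclideanSpace ℝ (Fin d) × ℝ => v p.1 p.2)
    (hvh : Continuous fun p : EuclideanSpace ℝ (Fin d) × ℝ => vh p.1 p.2)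
    (L : ℝ) (hL : 0 ≤ L)
    (hLip : ∀ (x y : EuclideanSpace ℝ (Fin d)) (t : ℝ),
      ‖vh x t - vh y t‖ ≤ L * ‖x - y‖)
    (X Xh : Ω → ℝ → EuclideanSpace ℝ (Fin d))
    (hXmeas : ∀ t, Measurable fun ω => X ω t)
    (hXhmeas : ∀ t, Measurable fun ω => Xh ω t)
    (hX : ∀ ω, ∀ t ∈ Set.Icc (0:ℝ) 1, HasDerivAt (X ω) (v (X ω t) t) t)
    (hXh : ∀ ω, ∀ t ∈ Set.Icc (0:ℝ) 1, HasDerivAt (Xh ω) (vh (Xh ω t) t) t)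
    (h0 : ∀ ω, X ω 0 = Xh ω 0) :
    W2sq (P.map fun ω => X ω 1) (P.map fun ω => Xh ω 1) ≤
      ENNReal.ofReal (Real.exp (1 + 2 * L)) *
        ∫⁻ s in Set.Icc (0:ℝ) 1, ∫⁻ ω, ENNReal.ofReal (‖v (X ω s) s - vh (X ω s) s‖ ^ 2) ∂P := by
  classical
  set c : ℝ := 1 + 2 * L with hc
  -- extended (projected) trajectories: continuous on all of ℝ
  set pr : ℝ → ℝ := fun s => ((Set.projIcc (0:ℝ) 1 zero_le_one s : Set.Icc (0:ℝ) 1) : ℝ) with hpr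
  have hprc : Continuous pr := continuous_subtype_val.comp continuous_projIcc
  have hprmem : ∀ s, pr s ∈ Set.Icc (0:ℝ) 1 := fun s => (Set.projIcc 0 1 zero_le_one s).2
  have hpreq : ∀ s ∈ Set.Icc (0:ℝ) 1, pr s = s := fun s hs => by
    simp [hpr, Set.projIcc_of_mem zero_le_one hs]
  set Y : Ω → ℝ → EuclideanSpace ℝ (Fin d) := fun ω s => X ω (pr s) with hY
  set Yh : Ω → ℝ → EuclideanSpace ℝ (Fin d) := fun ω s => Xh ω (pr s) with hYh
  have hXcont : ∀ ω, ContinuousOn (X ω) (Set.Icc 0 1) := fun ω t ht =>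
    (hX ω t ht).continuousAt.continuousWithinAt
  have hXhcont : ∀ ω, ContinuousOn (Xh ω) (Set.Icc 0 1) := fun ω t ht =>
    (hXh ω t ht).continuousAt.continuousWithinAt
  have hYc : ∀ ω, Continuous (Y ω) := fun ω =>
    (hXcont ω).comp_continuous hprc hprmem
  have hYhc : ∀ ω, Continuous (Yh ω) := fun ω =>
    (hXhcont ω).comp_continuous hprc hprmem
  have hYX : ∀ ω, ∀ s ∈ Set.Icc (0:ℝ) 1, Y ω s = X ω s := fun ω s hs => by
    rw [hY]; simp only []; rw [hpreq s hs]
  have hYhX : ∀ ω, ∀ s ∈ Set.Icc (0:ℝ) 1, Yh ω s = Xh ω s := fun ω s hs => by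
    rw [hYh]; simp only []; rw [hpreq s hs]
  have hYd : ∀ ω, ∀ t ∈ Set.Ioo (0:ℝ) 1, HasDerivAt (Y ω) (v (Y ω t) t) t := by
    intro ω t ht
    have hmem := Set.Ioo_subset_Icc_self ht
    have : Y ω =ᶠ[nhds t] X ω := by
      filter_upwards [Ioo_mem_nhds ht.1 ht.2] with s hs
      exact hYX ω s (Set.Ioo_subset_Icc_self hs)
    rw [hYX ω t hmem]
    exact (hX ω t hmem).congr_of_eventuallyEq this
  have hYhd : ∀ ω, ∀ t ∈ Set.Ioo (0:ℝ) 1, HasDerivAt (Yh ω) (vh (Yh ω t) t) t := by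
    intro ω t ht
    have hmem := Set.Ioo_subset_Icc_self ht
    have : Yh ω =ᶠ[nhds t] Xh ω := by
      filter_upwards [Ioo_mem_nhds ht.1 ht.2] with s hs
      exact hYhX ω s (Set.Ioo_subset_Icc_self hs)
    rw [hYhX ω t hmem]
    exact (hXh ω t hmem).congr_of_eventuallyEq this
  have hY0 : ∀ ω, Y ω 0 = Yh ω 0 := fun ω => by
    rw [hYX ω 0 (by norm_num), hYhX ω 0 (by norm_num)]; exact h0 ω
  -- pathwise bound
  have hpath : ∀ ω, ‖X ω 1 - Xh ω 1‖ ^ 2 ≤ Real.exp c *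
      ∫ s in (0:ℝ)..1, ‖v (Y ω s) s - vh (Y ω s) s‖ ^ 2 := by
    intro ω
    have := pathwise v vh hv hvh L hL hLip (Y ω) (Yh ω) (hYc ω) (hYhc ω)
      (hYd ω) (hYhd ω) (hY0 ω)
    rwa [hYX ω 1 (by norm_num), hYhX ω 1 (by norm_num)] at this
  -- measurability of uncurried (s, ω) ↦ Y ω s
  have hYmeas_uncurry : Measurable (Function.uncurry (fun s ω => Y ω s)) :=
    measurable_uncurry_of_continuous_of_measurable (fun ω => hYc ω)
      (fun s => hXmeas (pr s))
  set G : ℝ → Ω → ℝ≥0∞ := fun s ω => ENNReal.ofReal (‖v (Y ω s) s - vh (Y ω s) s‖ ^ 2)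
    with hG
  have hGmeas : Measurable (Function.uncurry G) := by
    have h1 : Measurable fun p : ℝ × Ω => (Y p.2 p.1, p.1) :=
      hYmeas_uncurry.prodMk measurable_fst
    have h2 : Continuous fun q : EuclideanSpace ℝ (Fin d) × ℝ =>
        ENNReal.ofReal (‖v q.1 q.2 - vh q.1 q.2‖ ^ 2) :=
      ENNReal.continuous_ofReal.comp ((hv.sub hvh).norm.pow 2)
    have h3 : Function.uncurry G = (fun q : EuclideanSpace ℝ (Fin d) × ℝ =>
        ENNReal.ofReal (‖v q.1 q.2 - vh q.1 q.2‖ ^ 2)) ∘ (fun p : ℝ × Ω => (Y p.2 p.1, p.1)) := by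
      funext p; rfl
    rw [h3]
    exact h2.measurable.comp h1
  -- coupling
  set π : Measure (EuclideanSpace ℝ (Fin d) × EuclideanSpace ℝ (Fin d)) :=
    P.map (fun ω => (X ω 1, Xh ω 1)) with hπ
  have hpair : Measurable fun ω => (X ω 1, Xh ω 1) := (hXmeas 1).prodMk (hXhmeas 1)
  have hfst : π.map Prod.fst = P.map fun ω => X ω 1 := by
    rw [hπ, Measure.map_map measurable_fst hpair]; rfl
  have hsnd : π.map Prod.snd = P.map fun ω => Xh ω 1 := by
    rw [hπ, Measure.map_map measurable_snd hpair]; rfl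
  have step1 : W2sq (P.map fun ω => X ω 1) (P.map fun ω => Xh ω 1) ≤
      ∫⁻ p, ENNReal.ofReal (‖p.1 - p.2‖ ^ 2) ∂π := by
    refine le_trans (iInf_le _ π) ?_
    rw [iInf_pos hfst, iInf_pos hsnd]
  have hnormmeas : Measurable fun p : EuclideanSpace ℝ (Fin d) × EuclideanSpace ℝ (Fin d) =>
      ENNReal.ofReal (‖p.1 - p.2‖ ^ 2) :=
    (ENNReal.continuous_ofReal.comp ((continuous_fst.sub continuous_snd).norm.pow 2)).measurable
  have step2 : ∫⁻ p, ENNReal.ofReal (‖p.1 - p.2‖ ^ 2) ∂π =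
      ∫⁻ ω, ENNReal.ofReal (‖X ω 1 - Xh ω 1‖ ^ 2) ∂P := by
    rw [hπ, lintegral_map hnormmeas hpair]
  -- pointwise ℝ≥0∞ bound
  have step3 : ∀ ω, ENNReal.ofReal (‖X ω 1 - Xh ω 1‖ ^ 2) ≤
      ENNReal.ofReal (Real.exp c) * ∫⁻ s in Set.Icc (0:ℝ) 1, G s ω := by
    intro ω
    have hgc : Continuous fun s => ‖v (Y ω s) s - vh (Y ω s) s‖ ^ 2 := by
      have : Continuous fun s => v (Y ω s) s - vh (Y ω s) s :=
        (hv.comp ((hYc ω).prodMk continuous_id)).sub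
          (hvh.comp ((hYc ω).prodMk continuous_id))
      exact this.norm.pow 2
    have hint : IntegrableOn (fun s => ‖v (Y ω s) s - vh (Y ω s) s‖ ^ 2)
        (Set.Ioc (0:ℝ) 1) := (hgc.integrableOn_Icc).mono_set Set.Ioc_subset_Icc_self
    have heq : ENNReal.ofReal (∫ s in (0:ℝ)..1, ‖v (Y ω s) s - vh (Y ω s) s‖ ^ 2) =
        ∫⁻ s in Set.Ioc (0:ℝ) 1, G s ω := by
      rw [intervalIntegral.integral_of_le zero_le_one,
        ofReal_integral_eq_lintegral_ofReal hint
          (Filter.Eventually.of_forall fun s => by positivity)]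
    calc ENNReal.ofReal (‖X ω 1 - Xh ω 1‖ ^ 2)
        ≤ ENNReal.ofReal (Real.exp c *
            ∫ s in (0:ℝ)..1, ‖v (Y ω s) s - vh (Y ω s) s‖ ^ 2) :=
          ENNReal.ofReal_le_ofReal (hpath ω)
      _ = ENNReal.ofReal (Real.exp c) *
            ENNReal.ofReal (∫ s in (0:ℝ)..1, ‖v (Y ω s) s - vh (Y ω s) s‖ ^ 2) :=
          ENNReal.ofReal_mul (Real.exp_pos _).le
      _ = ENNReal.ofReal (Real.exp c) * ∫⁻ s in Set.Ioc (0:ℝ) 1, G s ω := by rw [heq]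
      _ ≤ ENNReal.ofReal (Real.exp c) * ∫⁻ s in Set.Icc (0:ℝ) 1, G s ω := by
          exact mul_le_mul_of_nonneg_left (lintegral_mono_set Set.Ioc_subset_Icc_self) (zero_le)
  -- integrate over ω, pull constant, swap
  have hGmeas_swap : Measurable (Function.uncurry (fun ω s => G s ω)) := by
    have : (Function.uncurry (fun ω s => G s ω)) = (Function.uncurry G) ∘ Prod.swap := rfl
    rw [this]; exact hGmeas.comp measurable_swap
  have hImeas : Measurable fun ω => ∫⁻ s in Set.Icc (0:ℝ) 1, G s ω := by
    exact Measurable.lintegral_prod_right hGmeas_swap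
  have swap : ∫⁻ ω, (∫⁻ s in Set.Icc (0:ℝ) 1, G s ω) ∂P =
      ∫⁻ s in Set.Icc (0:ℝ) 1, (∫⁻ ω, G s ω ∂P) := by
    exact lintegral_lintegral_swap hGmeas_swap.aemeasurable
  have final : ∀ s ∈ Set.Icc (0:ℝ) 1, (∫⁻ ω, G s ω ∂P) =
      ∫⁻ ω, ENNReal.ofReal (‖v (X ω s) s - vh (X ω s) s‖ ^ 2) ∂P := by
    intro s hs
    apply lintegral_congr
    intro ω
    rw [hG]; simp only []; rw [hYX ω s hs]
  calc W2sq (P.map fun ω => X ω 1) (P.map fun ω => Xh ω 1)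
      ≤ ∫⁻ ω, ENNReal.ofReal (‖X ω 1 - Xh ω 1‖ ^ 2) ∂P := step1.trans step2.le
    _ ≤ ∫⁻ ω, ENNReal.ofReal (Real.exp c) * (∫⁻ s in Set.Icc (0:ℝ) 1, G s ω) ∂P :=
        lintegral_mono step3
    _ = ENNReal.ofReal (Real.exp c) * ∫⁻ ω, (∫⁻ s in Set.Icc (0:ℝ) 1, G s ω) ∂P :=
        lintegral_const_mul _ hImeas
    _ = ENNReal.ofReal (Real.exp c) * ∫⁻ s in Set.Icc (0:ℝ) 1, (∫⁻ ω, G s ω ∂P) := by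
        rw [swap]
    _ = ENNReal.ofReal (Real.exp c) *
        ∫⁻ s in Set.Icc (0:ℝ) 1, ∫⁻ ω, ENNReal.ofReal (‖v (X ω s) s - vh (X ω s) s‖ ^ 2) ∂P := by
        congr 1
        exact setLIntegral_congr_fun measurableSet_Icc final
end

section
/- (Wasserstein bound for latent flow matching.) Let g : ℝ^m → ℝ^d be L_g-Lipschitz, and suppose every real data point x ∼ p₀ satisfies g(z₀(x)) = x + Δ(x) with ‖Δ(x)‖ ≤ C almost surely, where z₀(x) has law q₀. Let q̂₀ be the law of the terminal point of the ODE driven by an L̂-Lipschitz estimated velocity v̂ started from the same noise as the true latent flow whose terminal law is q₀, and let p̂₀ = g♯q̂₀. Then W₂²(p₀, p̂₀) ≤ 2C² + 2L_g² e^{1+2L̂} ∫_0^1 E_{q_t}[‖v(z_t,t) − v̂(z_t,t)‖²] dt. -/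
open MeasureTheory ENNReal Set

lemma gron {E : Type*} [NormedAddCommGroup E] [InnerProductSpace ℝ E]
    (v vh : E → ℝ → E)
    (hv : Continuous fun p : E × ℝ => v p.1 p.2)
    (hvh : Continuous fun p : E × ℝ => vh p.1 p.2)
    (L : ℝ) (hL : 0 ≤ L)
    (hLip : ∀ a b t, ‖vh a t - vh b t‖ ≤ L * ‖a - b‖)
    (Z Zh : ℝ → E)
    (hZ : ∀ t ∈ Set.Icc (0:ℝ) 1, HasDerivAt Z (v (Z t) t) t)
    (hZh : ∀ t ∈ Set.Icc (0:ℝ) 1, HasDerivAt Zh (vh (Zh t) t) t)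
    (h1 : Z 1 = Zh 1) :
    ‖Z 0 - Zh 0‖ ^ 2 ≤
      Real.exp (1 + 2 * L) * ∫ t in (0:ℝ)..1, ‖v (Z t) t - vh (Z t) t‖ ^ 2 := by
  set K : ℝ := 1 + 2 * L with hK
  have hK1 : (1:ℝ) ≤ K := by simp only [hK]; linarith
  set e : ℝ → ℝ := fun t => ‖v (Z t) t - vh (Z t) t‖ with he
  set f : ℝ → ℝ := fun s => Real.exp (K * s) * e s ^ 2 with hf
  -- continuity facts on Icc 0 1
  have hcontZ : ∀ t ∈ Icc (0:ℝ) 1, ContinuousAt Z t := fun t ht => (hZ t ht).continuousAt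
  have hcontZh : ∀ t ∈ Icc (0:ℝ) 1, ContinuousAt Zh t := fun t ht => (hZh t ht).continuousAt
  have hecont : ∀ t ∈ Icc (0:ℝ) 1, ContinuousAt (fun s => e s ^ 2) t := by
    intro t ht
    have h1 : ContinuousAt (fun s => (Z s, s)) t := (hcontZ t ht).prodMk continuousAt_id
    have h2 : ContinuousAt (fun s => v (Z s) s) t := hv.continuousAt.comp h1
    have h3 : ContinuousAt (fun s => vh (Z s) s) t := hvh.continuousAt.comp h1
    exact ((h2.sub h3).norm).pow 2
  have hexpc : Continuous (fun s : ℝ => Real.exp (K * s)) :=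
    Real.continuous_exp.comp (continuous_const.mul continuous_id)
  have hconte : ∀ t ∈ Icc (0:ℝ) 1, ContinuousAt f t := fun t ht =>
    hexpc.continuousAt.mul (hecont t ht)
  have hfint : IntervalIntegrable f volume 0 1 := by
    apply ContinuousOn.intervalIntegrable
    rw [Set.uIcc_of_le zero_le_one]
    exact fun t ht => (hconte t ht).continuousWithinAt
  -- δ and its derivative
  set δ : ℝ → E := fun t => Z t - Zh t with hδ
  have hδderiv : ∀ t ∈ Icc (0:ℝ) 1,
      HasDerivAt δ (v (Z t) t - vh (Zh t) t) t := fun t ht => (hZ t ht).sub (hZh t ht)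
  set N : ℝ → ℝ := fun t => ‖δ t‖ ^ 2 with hN
  have hNeq : N = fun t => inner ℝ (δ t) (δ t) := by
    funext t
    rw [hN, real_inner_self_eq_norm_sq]
  have hNderiv : ∀ t ∈ Icc (0:ℝ) 1,
      HasDerivAt N (2 * inner ℝ (δ t) (v (Z t) t - vh (Zh t) t)) t := by
    intro t ht
    rw [hNeq]
    have := (hδderiv t ht).inner ℝ (hδderiv t ht)
    refine this.congr_deriv ?_
    rw [real_inner_comm]
    ring
  -- the Lyapunov function
  set G : ℝ → ℝ := fun t => Real.exp (K * t) * N t + ∫ s in (0:ℝ)..t, f s with hG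
  set D : ℝ → ℝ := fun t => (Real.exp (K * t) * K) * N t +
      Real.exp (K * t) * (2 * inner ℝ (δ t) (v (Z t) t - vh (Zh t) t)) + f t with hD
  have hG'all : ∀ t ∈ Ioo (0:ℝ) 1, HasDerivAt G (D t) t := by
    intro t ht
    have htIcc : t ∈ Icc (0:ℝ) 1 := Ioo_subset_Icc_self ht
    have hFTC : HasDerivAt (fun u => ∫ s in (0:ℝ)..u, f s) (f t) t := by
      apply intervalIntegral.integral_hasDerivAt_right
      · exact hfint.mono_set (by
          rw [Set.uIcc_of_le zero_le_one, Set.uIcc_of_le htIcc.1]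
          exact Icc_subset_Icc le_rfl htIcc.2)
      · exact ContinuousOn.stronglyMeasurableAtFilter isOpen_Ioo
          (fun s hs => (hconte s (Ioo_subset_Icc_self hs)).continuousWithinAt) t ht
      · exact hconte t htIcc
    have hexp : HasDerivAt (fun s => Real.exp (K * s)) (Real.exp (K * t) * K) t := by
      have hlin : HasDerivAt (fun s : ℝ => K * s) K t := by
        simpa using (hasDerivAt_id t).const_mul K
      exact (Real.hasDerivAt_exp (K * t)).comp t hlin
    exact (hexp.mul (hNderiv t htIcc)).add hFTC
  have hDnn : ∀ t ∈ Ioo (0:ℝ) 1, 0 ≤ D t := by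
    intro t ht
    have hip : |(inner ℝ (δ t) (v (Z t) t - vh (Zh t) t) : ℝ)| ≤
        ‖δ t‖ * ‖v (Z t) t - vh (Zh t) t‖ := abs_real_inner_le_norm _ _
    have hsplit : ‖v (Z t) t - vh (Zh t) t‖ ≤ e t + L * ‖δ t‖ := by
      calc ‖v (Z t) t - vh (Zh t) t‖
          = ‖(v (Z t) t - vh (Z t) t) + (vh (Z t) t - vh (Zh t) t)‖ := by
            congr 1; abel
        _ ≤ ‖v (Z t) t - vh (Z t) t‖ + ‖vh (Z t) t - vh (Zh t) t‖ := norm_add_le _ _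
        _ ≤ e t + L * ‖δ t‖ := add_le_add le_rfl (hLip _ _ t)
    have hN0 : 0 ≤ ‖δ t‖ := norm_nonneg _
    have he0 : 0 ≤ e t := norm_nonneg _
    have hexp0 : 0 < Real.exp (K * t) := Real.exp_pos _
    have habs := abs_le.mp hip
    have hnn : 0 ≤ ‖v (Z t) t - vh (Zh t) t‖ := norm_nonneg _
    have hNval : N t = ‖δ t‖ ^ 2 := rfl
    have hfval : f t = Real.exp (K * t) * e t ^ 2 := rfl
    have hKval : K = 1 + 2 * L := hK
    simp only [hD, hNval, hfval]
    have h2 : -(‖δ t‖ * (e t + L * ‖δ t‖)) ≤ (inner ℝ (δ t) (v (Z t) t - vh (Zh t) t) : ℝ) :=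
      le_trans (neg_le_neg (mul_le_mul_of_nonneg_left hsplit hN0)) habs.1
    have hcore : 0 ≤ K * ‖δ t‖ ^ 2 +
        2 * (inner ℝ (δ t) (v (Z t) t - vh (Zh t) t) : ℝ) + e t ^ 2 := by
      nlinarith [sq_nonneg (‖δ t‖ - e t), hKval]
    nlinarith [mul_nonneg hexp0.le hcore]
  have hGmono : MonotoneOn G (Icc (0:ℝ) 1) := by
    apply monotoneOn_of_deriv_nonneg (convex_Icc 0 1)
    · apply ContinuousOn.add
      · intro t ht
        exact (hexpc.continuousAt.mul
          (((hcontZ t ht).sub (hcontZh t ht)).norm.pow 2)).continuousWithinAt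
      · have h := intervalIntegral.continuousOn_primitive_interval
          (f := f) (a := 0) (b := 1) (μ := volume) (by
            rw [Set.uIcc_of_le (zero_le_one (α := ℝ)),
              ← intervalIntegrable_iff_integrableOn_Icc_of_le zero_le_one]
            exact hfint)
        rwa [Set.uIcc_of_le (zero_le_one (α := ℝ))] at h
    · rw [interior_Icc]
      exact fun t ht => ((hG'all t ht).differentiableAt).differentiableWithinAt
    · rw [interior_Icc]
      intro t ht
      rw [(hG'all t ht).deriv]
      exact hDnn t ht
  have hG01 : G 0 ≤ G 1 := hGmono (by norm_num) (by norm_num) zero_le_one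
  have hG0 : G 0 = ‖δ 0‖ ^ 2 := by simp [hG, hN]
  have hG1 : G 1 = ∫ s in (0:ℝ)..1, f s := by
    have hδ1 : δ 1 = 0 := by simp [hδ, h1]
    simp [hG, hN, hδ1]
  have hfin : (∫ s in (0:ℝ)..1, f s) ≤
      Real.exp K * ∫ t in (0:ℝ)..1, e t ^ 2 := by
    rw [← intervalIntegral.integral_const_mul]
    apply intervalIntegral.integral_mono_on zero_le_one hfint
    · apply ContinuousOn.intervalIntegrable
      rw [Set.uIcc_of_le zero_le_one]
      exact fun t ht => (continuousAt_const.mul (hecont t ht)).continuousWithinAt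
    · intro s hs
      have hee : Real.exp (K * s) ≤ Real.exp K := by
        apply Real.exp_le_exp.mpr
        nlinarith [hs.1, hs.2, hK1]
      have he2 : 0 ≤ e s ^ 2 := sq_nonneg _
      calc f s = Real.exp (K * s) * e s ^ 2 := rfl
        _ ≤ Real.exp K * e s ^ 2 := by nlinarith
  calc ‖Z 0 - Zh 0‖ ^ 2 = G 0 := by rw [hG0]
    _ ≤ G 1 := hG01
    _ = ∫ s in (0:ℝ)..1, f s := hG1
    _ ≤ Real.exp (1 + 2 * L) * ∫ t in (0:ℝ)..1, e t ^ 2 := hfin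



set_option maxHeartbeats 1000000 in
/-- Wasserstein bound for latent flow matching (Theorem 1 of the paper). -/
theorem stmt_8 {m d : ℕ} {Ω : Type*} [MeasurableSpace Ω]
    (P : Measure Ω) [IsProbabilityMeasure P]
    (g : EuclideanSpace ℝ (Fin m) → EuclideanSpace ℝ (Fin d))
    (Lg : ℝ) (hLg : 0 ≤ Lg) (hgLip : ∀ x y, ‖g x - g y‖ ≤ Lg * ‖x - y‖)
    (hgmeas : Measurable g)
    (x : Ω → EuclideanSpace ℝ (Fin d)) (hxmeas : Measurable x)
    (p0 : Measure (EuclideanSpace ℝ (Fin d))) (hp0 : p0 = P.map x)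
    (Δ : EuclideanSpace ℝ (Fin d) → EuclideanSpace ℝ (Fin d))
    (C : ℝ) (hC : 0 ≤ C) (hΔ : ∀ y, ‖Δ y‖ ≤ C)
    (v vh : EuclideanSpace ℝ (Fin m) → ℝ → EuclideanSpace ℝ (Fin m))
    (hv : Continuous fun p : EuclideanSpace ℝ (Fin m) × ℝ => v p.1 p.2)
    (hvh : Continuous fun p : EuclideanSpace ℝ (Fin m) × ℝ => vh p.1 p.2)
    (L : ℝ) (hL : 0 ≤ L)
    (hLip : ∀ (a b : EuclideanSpace ℝ (Fin m)) (t : ℝ),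
      ‖vh a t - vh b t‖ ≤ L * ‖a - b‖)
    (Z Zh : Ω → ℝ → EuclideanSpace ℝ (Fin m))
    (hZmeas : ∀ t, Measurable fun ω => Z ω t)
    (hZhmeas : ∀ t, Measurable fun ω => Zh ω t)
    (hZ : ∀ ω, ∀ t ∈ Set.Icc (0:ℝ) 1, HasDerivAt (Z ω) (v (Z ω t) t) t)
    (hZh : ∀ ω, ∀ t ∈ Set.Icc (0:ℝ) 1, HasDerivAt (Zh ω) (vh (Zh ω t) t) t)
    (hnoise : ∀ ω, Z ω 1 = Zh ω 1)
    (hrecon : ∀ ω, g (Z ω 0) = x ω + Δ (x ω))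
    (phat0 : Measure (EuclideanSpace ℝ (Fin d)))
    (hphat0 : phat0 = (P.map fun ω => Zh ω 0).map g) :
    W2sq p0 phat0 ≤
      ENNReal.ofReal (2 * C ^ 2) +
        ENNReal.ofReal (2 * Lg ^ 2 * Real.exp (1 + 2 * L)) *
          ∫⁻ t in Set.Icc (0:ℝ) 1,
            ∫⁻ ω, ENNReal.ofReal (‖v (Z ω t) t - vh (Z ω t) t‖ ^ 2) ∂P := by
  classical
  subst hp0 hphat0
  set c : ℝ := 2 * Lg ^ 2 * Real.exp (1 + 2 * L) with hc
  have hc0 : 0 ≤ c := by positivity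
  -- the clamp function
  set proj : ℝ → ℝ := fun t => max 0 (min 1 t) with hproj
  have hprojc : Continuous proj := continuous_const.max (continuous_const.min continuous_id)
  have hprojmem : ∀ t, proj t ∈ Icc (0:ℝ) 1 :=
    fun t => ⟨le_max_left _ _, max_le zero_le_one (min_le_left _ _)⟩
  have hprojeq : ∀ t ∈ Icc (0:ℝ) 1, proj t = t := by
    intro t ht
    simp only [hproj]
    rw [min_eq_right ht.2, max_eq_right ht.1]
  -- per-ω error functions
  set e2 : Ω → ℝ → ℝ := fun ω t => ‖v (Z ω t) t - vh (Z ω t) t‖ ^ 2 with he2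
  set I : Ω → ℝ := fun ω => ∫ t in (0:ℝ)..1, e2 ω t with hI
  have hcontZ : ∀ ω, ∀ t ∈ Icc (0:ℝ) 1, ContinuousAt (Z ω) t :=
    fun ω t ht => (hZ ω t ht).continuousAt
  have he2cont : ∀ ω, ∀ t ∈ Icc (0:ℝ) 1, ContinuousAt (e2 ω) t := by
    intro ω t ht
    have h1 : ContinuousAt (fun s => (Z ω s, s)) t := (hcontZ ω t ht).prodMk continuousAt_id
    exact (((hv.continuousAt.comp h1).sub (hvh.continuousAt.comp h1)).norm).pow 2
  have he2int : ∀ ω, IntervalIntegrable (e2 ω) volume 0 1 := by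
    intro ω
    apply ContinuousOn.intervalIntegrable
    rw [Set.uIcc_of_le zero_le_one]
    exact fun t ht => (he2cont ω t ht).continuousWithinAt
  have hI0 : ∀ ω, 0 ≤ I ω :=
    fun ω => intervalIntegral.integral_nonneg zero_le_one (fun t _ => sq_nonneg _)
  -- the Grönwall bound per ω
  have hgron : ∀ ω, ‖Z ω 0 - Zh ω 0‖ ^ 2 ≤ Real.exp (1 + 2 * L) * I ω :=
    fun ω => gron v vh hv hvh L hL hLip (Z ω) (Zh ω) (hZ ω) (hZh ω) (hnoise ω)
  -- pointwise real bound
  have hpt : ∀ ω, ‖x ω - g (Zh ω 0)‖ ^ 2 ≤ 2 * C ^ 2 + c * I ω := by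
    intro ω
    have h1 : ‖x ω - g (Zh ω 0)‖ ≤ Lg * ‖Z ω 0 - Zh ω 0‖ + C := by
      have hx : x ω - g (Zh ω 0) = (g (Z ω 0) - g (Zh ω 0)) - Δ (x ω) := by
        rw [hrecon ω]; abel
      rw [hx]
      calc ‖(g (Z ω 0) - g (Zh ω 0)) - Δ (x ω)‖
          ≤ ‖g (Z ω 0) - g (Zh ω 0)‖ + ‖Δ (x ω)‖ := norm_sub_le _ _
        _ ≤ Lg * ‖Z ω 0 - Zh ω 0‖ + C := add_le_add (hgLip _ _) (hΔ _)
    have hn0 : 0 ≤ ‖x ω - g (Zh ω 0)‖ := norm_nonneg _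
    have hn1 : 0 ≤ ‖Z ω 0 - Zh ω 0‖ := norm_nonneg _
    have hg2 := hgron ω
    have hsq : ‖x ω - g (Zh ω 0)‖ ^ 2 ≤ (Lg * ‖Z ω 0 - Zh ω 0‖ + C) ^ 2 := by
      apply sq_le_sq' <;> nlinarith
    have h2 : (Lg * ‖Z ω 0 - Zh ω 0‖ + C) ^ 2 ≤
        2 * C ^ 2 + 2 * Lg ^ 2 * ‖Z ω 0 - Zh ω 0‖ ^ 2 := by
      nlinarith [sq_nonneg (Lg * ‖Z ω 0 - Zh ω 0‖ - C)]
    have h3 : 2 * Lg ^ 2 * ‖Z ω 0 - Zh ω 0‖ ^ 2 ≤ c * I ω := by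
      rw [hc]
      nlinarith [mul_le_mul_of_nonneg_left hg2 (by positivity : (0:ℝ) ≤ 2 * Lg ^ 2)]
    linarith
  -- the coupling
  set F : Ω → EuclideanSpace ℝ (Fin d) × EuclideanSpace ℝ (Fin d) := fun ω => (x ω, g (Zh ω 0)) with hF
  have hFmeas : Measurable F := hxmeas.prodMk (hgmeas.comp (hZhmeas 0))
  have hstep1 : W2sq (P.map x) ((P.map fun ω => Zh ω 0).map g) ≤
      ∫⁻ p, ENNReal.ofReal (‖p.1 - p.2‖ ^ 2) ∂(P.map F) := by
    have hfst : (P.map F).map Prod.fst = P.map x := by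
      rw [Measure.map_map measurable_fst hFmeas]; rfl
    have hsnd : (P.map F).map Prod.snd = (P.map fun ω => Zh ω 0).map g := by
      rw [Measure.map_map measurable_snd hFmeas,
        Measure.map_map hgmeas (hZhmeas 0)]
      rfl
    exact iInf_le_of_le (P.map F) (iInf_le_of_le hfst (iInf_le_of_le hsnd le_rfl))
  have hnormmeas : Measurable fun p : EuclideanSpace ℝ (Fin d) × EuclideanSpace ℝ (Fin d) => ENNReal.ofReal (‖p.1 - p.2‖ ^ 2) :=
    (ENNReal.continuous_ofReal.comp (((continuous_fst.sub continuous_snd).norm).pow 2)).measurable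
  rw [MeasureTheory.lintegral_map hnormmeas hFmeas] at hstep1
  -- the clamped integrand and its joint measurability
  set Φ : EuclideanSpace ℝ (Fin m) × ℝ → ℝ≥0∞ := fun q =>
    ENNReal.ofReal (‖v q.1 q.2 - vh q.1 q.2‖ ^ 2) with hΦdef
  have hΦ : Continuous Φ :=
    ENNReal.continuous_ofReal.comp (((hv.sub hvh).norm).pow 2)
  set Fc : Ω → ℝ → ℝ≥0∞ := fun ω t => Φ (Z ω (proj t), t) with hFc
  have hZcmeas : Measurable (Function.uncurry fun t ω => Z ω (proj t)) := by
    apply measurable_uncurry_of_continuous_of_measurable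
    · intro ω
      rw [continuous_iff_continuousAt]
      intro t
      exact ContinuousAt.comp (hcontZ ω (proj t) (hprojmem t)) hprojc.continuousAt
    · intro t
      exact hZmeas (proj t)
  have hFcmeas : Measurable (Function.uncurry Fc) := by
    have h1 : Measurable fun p : Ω × ℝ => Z p.1 (proj p.2) :=
      hZcmeas.comp measurable_swap
    have h2 : Measurable fun p : Ω × ℝ => (Z p.1 (proj p.2), p.2) :=
      h1.prodMk measurable_snd
    exact hΦ.measurable.comp h2
  -- per-ω bound from real integral to lintegral over Icc
  have hIbound : ∀ ω, ENNReal.ofReal (I ω) ≤ ∫⁻ t in Icc (0:ℝ) 1, Fc ω t := by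
    intro ω
    have hIoc : I ω = ∫ t in Ioc (0:ℝ) 1, e2 ω t := by
      rw [hI]
      simp only
      rw [intervalIntegral.integral_of_le zero_le_one]
    have heq : ENNReal.ofReal (I ω) = ∫⁻ t in Ioc (0:ℝ) 1, ENNReal.ofReal (e2 ω t) := by
      rw [hIoc]
      exact ofReal_integral_eq_lintegral_ofReal (he2int ω).1
        (ae_of_all _ fun t => sq_nonneg _)
    rw [heq]
    have hcongr : ∫⁻ t in Ioc (0:ℝ) 1, ENNReal.ofReal (e2 ω t) =
        ∫⁻ t in Ioc (0:ℝ) 1, Fc ω t := by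
      apply setLIntegral_congr_fun measurableSet_Ioc
      intro t ht
      rw [hFc]
      simp only [hΦdef]
      rw [hprojeq t (Ioc_subset_Icc_self ht)]
    rw [hcongr]
    exact lintegral_mono_set Ioc_subset_Icc_self
  -- assemble
  calc W2sq (P.map x) ((P.map fun ω => Zh ω 0).map g)
      ≤ ∫⁻ ω, ENNReal.ofReal (‖(F ω).1 - (F ω).2‖ ^ 2) ∂P := hstep1
    _ ≤ ∫⁻ ω, (ENNReal.ofReal (2 * C ^ 2) + ENNReal.ofReal c * ENNReal.ofReal (I ω)) ∂P := by
        apply lintegral_mono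
        intro ω
        calc ENNReal.ofReal (‖(F ω).1 - (F ω).2‖ ^ 2)
            ≤ ENNReal.ofReal (2 * C ^ 2 + c * I ω) := ENNReal.ofReal_le_ofReal (hpt ω)
          _ = ENNReal.ofReal (2 * C ^ 2) + ENNReal.ofReal c * ENNReal.ofReal (I ω) := by
              rw [ENNReal.ofReal_add (by positivity) (mul_nonneg hc0 (hI0 ω)),
                ENNReal.ofReal_mul hc0]
    _ = ENNReal.ofReal (2 * C ^ 2) + ENNReal.ofReal c * ∫⁻ ω, ENNReal.ofReal (I ω) ∂P := by
        rw [lintegral_add_left measurable_const, lintegral_const, measure_univ, mul_one,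
          lintegral_const_mul' _ _ ENNReal.ofReal_ne_top]
    _ ≤ ENNReal.ofReal (2 * C ^ 2) + ENNReal.ofReal c *
        ∫⁻ ω, (∫⁻ t in Icc (0:ℝ) 1, Fc ω t) ∂P := by
        gcongr
        exact hIbound _
    _ = ENNReal.ofReal (2 * C ^ 2) + ENNReal.ofReal c *
        ∫⁻ t in Icc (0:ℝ) 1, (∫⁻ ω, Fc ω t ∂P) := by
        rw [lintegral_lintegral_swap hFcmeas.aemeasurable]
    _ = ENNReal.ofReal (2 * C ^ 2) + ENNReal.ofReal c *
        ∫⁻ t in Icc (0:ℝ) 1, (∫⁻ ω, ENNReal.ofReal (e2 ω t) ∂P) := by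
        congr 1
        congr 1
        apply setLIntegral_congr_fun measurableSet_Icc
        intro t ht
        apply lintegral_congr
        intro ω
        rw [hFc]
        simp only [hΦdef]
        rw [hprojeq t ht]
    _ = ENNReal.ofReal (2 * C ^ 2) +
        ENNReal.ofReal (2 * Lg ^ 2 * Real.exp (1 + 2 * L)) *
          ∫⁻ t in Set.Icc (0:ℝ) 1,
            ∫⁻ ω, ENNReal.ofReal (‖v (Z ω t) t - vh (Z ω t) t‖ ^ 2) ∂P := rfl
end
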